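/- The function F_{2M}(x) := 2 ∑_{p=1}^{M} ([(2p-3)!!]^2/(2p-1)!) sin^{2p-1}(x/2) satisfies the Taylor expansion F_{2M}(x) = x − ([(2M-1)!!]^2 / (2^{2M}(2M+1)!)) x^{2M+1} + O(x^{2M+3}) as x → 0, for every integer M ≥ 1. -/

import Mathlib

/-!
Integrating the Taylor expansion of the binomial series
`(1 - u)^(-1/2) = ∑ multichoose(1/2, k) uᵏ` along `u = s²` gives
`arcsin s = ∑_{k<N} A_k s^(2k+1) + O(s^(2N+1))` with `A_k = ((2k-1)‼)² / (2k+1)!`, and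
`F_{2M}(x) = 2 ∑_{k<M} A_k sin^(2k+1)(x/2)` is twice such a truncation at `s = sin(x/2)`.
As `arcsin (sin (x/2)) = x/2`, this gives `F_{2M}(x) = x - 2 A_M sin^(2M+1)(x/2) + O(x^(2M+3))`,
and replacing `sin(x/2)` by `x/2` in the error term costs only `O(x^(2M+3))` because
`x - sin x = O(x³)`.
-/

open Nat Finset Real Filter Asymptotics

/-- The symbol `F_{2M}` of the `2M`-th order staggered finite difference
approximation of the first derivative. -/
noncomputable def FsymFD (M : ℕ) (x : ℝ) : ℝ :=
  2 * ∑ p ∈ Finset.Icc 1 M,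
    ((2 * p - 3)‼ : ℝ) ^ 2 / ((2 * p - 1)! : ℝ) * Real.sin (x / 2) ^ (2 * p - 1)

open Topology

theorem isBigO_pow_succ_of_hasDerivAt {E : Type*} [NormedAddCommGroup E] [NormedSpace ℝ E]
    {f f' : ℝ → E} {n : ℕ} (hf₀ : f 0 = 0) (hf : ∀ᶠ x in 𝓝 0, HasDerivAt f (f' x) x)
    (hf' : f' =O[𝓝 0] fun x => x ^ n) : f =O[𝓝 0] fun x => x ^ (n + 1) := by
  obtain ⟨C, hC, hbound⟩ := hf'.exists_nonneg
  obtain ⟨ε, hε, hball⟩ := Metric.eventually_nhds_iff_ball.1 (hf.and hbound.bound)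
  refine .of_bound C (Metric.eventually_nhds_iff_ball.2 ⟨ε, hε, fun x hx => ?_⟩)
  have hsub : Set.uIcc 0 x ⊆ Metric.ball 0 ε := by
    rw [← segment_eq_uIcc]
    exact (convex_ball 0 ε).segment_subset (Metric.mem_ball_self hε) hx
  have hderiv : ∀ t ∈ Set.uIcc 0 x, HasDerivWithinAt f (f' t) (Set.uIcc 0 x) t :=
    fun t ht => (hball t (hsub ht)).1.hasDerivWithinAt
  have hderiv_le : ∀ t ∈ Set.uIcc 0 x, ‖f' t‖ ≤ C * |x| ^ n := fun t ht => by
    have ht' : |t| ≤ |x| := by simpa using Set.abs_sub_left_of_mem_uIcc ht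
    calc ‖f' t‖ ≤ C * ‖t ^ n‖ := (hball t (hsub ht)).2
      _ ≤ C * |x| ^ n := by rw [norm_pow, Real.norm_eq_abs]; gcongr
  have := Convex.norm_image_sub_le_of_norm_hasDerivWithin_le hderiv hderiv_le (convex_uIcc 0 x)
    Set.left_mem_uIcc Set.right_mem_uIcc
  rw [hf₀, sub_zero, sub_zero] at this
  calc ‖f x‖ ≤ C * |x| ^ n * ‖x‖ := this
    _ = C * ‖x ^ (n + 1)‖ := by rw [norm_pow, Real.norm_eq_abs, pow_succ, mul_assoc]

theorem isBigO_comp_of_abs_le {f g : ℝ → ℝ} {n : ℕ} (hf : f =O[𝓝 0] fun x => x ^ n)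
    (hg : ∀ x, |g x| ≤ |x|) : (fun x => f (g x)) =O[𝓝 0] fun x => x ^ n := by
  have hg₀ : Tendsto g (𝓝 0) (𝓝 0) := by
    rw [tendsto_zero_iff_abs_tendsto_zero]
    exact squeeze_zero (fun _ => abs_nonneg _) hg (by simpa using continuous_abs.tendsto (0 : ℝ))
  refine (hf.comp_tendsto hg₀).trans (.of_bound 1 (.of_forall fun x => ?_))
  simp only [Function.comp_apply, norm_pow, Real.norm_eq_abs, one_mul]
  exact pow_le_pow_left₀ (abs_nonneg _) (hg x) n

theorem pow_sub_sin_pow_isBigO (n : ℕ) :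
    (fun x => x ^ (n + 1) - sin x ^ (n + 1)) =O[𝓝 0] fun x => x ^ (n + 3) := by
  refine .of_bound ((n + 1) / 6) (.of_forall fun x => ?_)
  simp only [Real.norm_eq_abs]
  calc |x ^ (n + 1) - sin x ^ (n + 1)|
      ≤ |x - sin x| * (n + 1 : ℕ) * max |x| |sin x| ^ n := abs_pow_sub_pow_le ..
    _ ≤ |x| ^ 3 / 6 * (n + 1 : ℕ) * |x| ^ n := by
      gcongr
      · exact abs_sub_sin_le x
      · exact max_le le_rfl abs_sin_le_abs
    _ = (n + 1) / 6 * |x ^ (n + 3)| := by push_cast; rw [abs_pow]; ring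

noncomputable def arcsinCoeff (k : ℕ) : ℝ := ((2 * k - 1)‼ : ℝ) ^ 2 / ((2 * k + 1)! : ℝ)

theorem ascPochhammer_eval_half_mul_two_pow (k : ℕ) :
    (ascPochhammer ℝ k).eval (1 / 2) * 2 ^ k = ((2 * k - 1)‼ : ℝ) := by
  induction k with
  | zero => simp
  | succ k ih =>
    rw [ascPochhammer_succ_eval, show 2 * (k + 1) - 1 = 2 * k + 1 by omega,
      Nat.doubleFactorial_add_one]
    push_cast
    rw [← ih]
    ring

theorem multichoose_half (k : ℕ) :
    Ring.multichoose (1 / 2 : ℝ) k = (2 * k + 1) * arcsinCoeff k := by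
  have hmul := Ring.factorial_nsmul_multichoose_eq_ascPochhammer (1 / 2 : ℝ) k
  rw [Polynomial.ascPochhammer_smeval_eq_eval, nsmul_eq_mul] at hmul
  have hfac : ((2 * k + 1)! : ℝ) = (2 * k + 1) * (2 * k - 1)‼ * (2 ^ k * k !) := by
    rw [Nat.factorial_eq_mul_doubleFactorial, Nat.doubleFactorial_add_one,
      Nat.doubleFactorial_two_mul]
    push_cast
    ring
  have h₁ : ((2 * k - 1)‼ : ℝ) ≠ 0 := by positivity
  have h₂ : (k ! : ℝ) ≠ 0 := by positivity
  rw [arcsinCoeff, hfac, ← ascPochhammer_eval_half_mul_two_pow, ← hmul]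
  field_simp

theorem inv_sqrt_one_sub_sub_taylor_isBigO (N : ℕ) :
    (fun u => (√(1 - u))⁻¹ - ∑ k ∈ range N, (2 * k + 1) * arcsinCoeff k * u ^ k)
      =O[𝓝 0] fun u => u ^ N := by
  have h := ((one_div_one_sub_rpow_hasFPowerSeriesOnBall_zero (1 / 2)).hasFPowerSeriesAt
    ).isBigO_sub_partialSum_pow N
  simp only [FormalMultilinearSeries.partialSum, FormalMultilinearSeries.ofScalars_apply_eq,
    ← Ring.multichoose_eq, multichoose_half, zero_add, smul_eq_mul, Real.norm_eq_abs] at h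
  rw [← isBigO_abs_right]
  simpa only [Real.sqrt_eq_rpow, one_div, abs_pow] using h

theorem arcsin_sub_taylor_isBigO (N : ℕ) :
    (fun s => arcsin s - ∑ k ∈ range N, arcsinCoeff k * s ^ (2 * k + 1))
      =O[𝓝 0] fun s => s ^ (2 * N + 1) := by
  refine isBigO_pow_succ_of_hasDerivAt (by simp) ?_ (f' := fun s =>
    (√(1 - s ^ 2))⁻¹ - ∑ k ∈ range N, (2 * k + 1) * arcsinCoeff k * (s ^ 2) ^ k) ?_
  · filter_upwards [Ioo_mem_nhds (neg_lt_zero.2 one_pos) one_pos] with s hs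
    have hsum : HasDerivAt (fun s => ∑ k ∈ range N, arcsinCoeff k * s ^ (2 * k + 1))
        (∑ k ∈ range N, (2 * k + 1) * arcsinCoeff k * (s ^ 2) ^ k) s := by
      refine HasDerivAt.fun_sum fun k _ => ?_
      refine ((hasDerivAt_pow (2 * k + 1) s).const_mul (arcsinCoeff k)).congr_deriv ?_
      push_cast
      rw [← pow_mul]
      ring
    simpa only [one_div] using (hasDerivAt_arcsin hs.1.ne' hs.2.ne).fun_sub hsum
  · have hsq : Tendsto (fun s : ℝ => s ^ 2) (𝓝 0) (𝓝 0) := by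
      simpa using (continuous_pow 2).tendsto (0 : ℝ)
    simpa only [Function.comp_def, ← pow_mul] using
      (inv_sqrt_one_sub_sub_taylor_isBigO N).comp_tendsto hsq

theorem FsymFD_eq_sum (M : ℕ) (x : ℝ) :
    FsymFD M x = 2 * ∑ k ∈ range M, arcsinCoeff k * sin (x / 2) ^ (2 * k + 1) := by
  rw [FsymFD, ← Finset.Ico_add_one_right_eq_Icc, Finset.sum_Ico_eq_sum_range,
    add_tsub_cancel_right]
  congr 1
  refine Finset.sum_congr rfl fun k _ => ?_
  rw [arcsinCoeff, show 2 * (1 + k) - 3 = 2 * k - 1 by omega,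
    show 2 * (1 + k) - 1 = 2 * k + 1 by omega]

theorem FsymFD_taylor_general (M : ℕ) :
    (fun x : ℝ => FsymFD M x -
        (x - ((2 * M - 1)‼ : ℝ) ^ 2 / (2 ^ (2 * M) * ((2 * M + 1)! : ℝ)) *
          x ^ (2 * M + 1)))
      =O[nhds 0] fun x : ℝ => x ^ (2 * M + 3) := by
  have hhalf (x : ℝ) : |x / 2| ≤ |x| := by rw [abs_div, abs_two]; linarith [abs_nonneg x]
  have hcoeff (x : ℝ) : ((2 * M - 1)‼ : ℝ) ^ 2 / (2 ^ (2 * M) * ((2 * M + 1)! : ℝ)) *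
      x ^ (2 * M + 1) = 2 * arcsinCoeff M * (x / 2) ^ (2 * M + 1) := by
    rw [arcsinCoeff, div_pow, pow_succ 2 (2 * M)]
    field_simp
  have hremainder := isBigO_comp_of_abs_le (arcsin_sub_taylor_isBigO (M + 1))
    (g := fun x => sin (x / 2)) fun x => abs_sin_le_abs.trans (hhalf x)
  have hsin := isBigO_comp_of_abs_le (pow_sub_sin_pow_isBigO (2 * M)) hhalf
  refine ((hremainder.const_mul_left (-2)).add (hsin.const_mul_left (2 * arcsinCoeff M))).congr'
    ?_ .rfl
  filter_upwards [Ioo_mem_nhds (neg_neg_of_pos pi_pos) pi_pos] with x hx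
  rw [arcsin_sin (by linarith [hx.1]) (by linarith [hx.2]), FsymFD_eq_sum, sum_range_succ, hcoeff]
  ring

/-- Taylor expansion of the symbol:
`F_{2M}(x) = x − ([(2M-1)!!]²/(2^{2M}(2M+1)!)) x^{2M+1} + O(x^{2M+3})` as `x → 0`. -/
theorem FsymFD_taylor (M : ℕ) (hM : 1 ≤ M) :
    (fun x : ℝ => FsymFD M x -
        (x - ((2 * M - 1)‼ : ℝ) ^ 2 / (2 ^ (2 * M) * ((2 * M + 1)! : ℝ)) *
          x ^ (2 * M + 1)))
      =O[nhds 0] fun x : ℝ => x ^ (2 * M + 3) :=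
  FsymFD_taylor_general M
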